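/- Fix μ in the probability simplex Δ^{m−1}. Let x_1,...,x_n be i.i.d. random coordinate vectors with Pr[x = e_i] = μ_i, and μ̂ := (1/n)Σ x_i. Then for all t > 0, Pr[‖μ̂ − μ‖₂ > (1+√t)/√n] ≤ e^{−t}. -/

import Mathlib

/-!
Viewed as a function of the samples, the error `‖μ̂ - μ‖₂` has bounded differences: changing one
sample moves `μ̂` by `(e_i - e_j) / n`, hence the error by at most `√2 / n`. McDiarmid's inequality
then bounds the probability of exceeding the mean by `√t / √n` by `e^{-t}`, and the mean is at most
`1 / √n` by Jensen, since `E ‖μ̂ - μ‖₂² = ∑ μ_i (1 - μ_i) / n ≤ 1 / n`. McDiarmid's inequality is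
proved on the finite product space by induction on `n`: averaging out the first sample leaves a
function with bounded differences in the remaining ones, and Hoeffding's lemma controls the
exponential moment of each fiber.
-/

open Real MeasureTheory ProbabilityTheory Finset

/-- Euclidean norm of a vector in `ℝ^n`. -/
noncomputable def vnorm {n : ℕ} (v : Fin n → ℝ) : ℝ := Real.sqrt (∑ i, v i ^ 2)

theorem sum_mul_exp_le_of_mem_Icc {α : Type*} [Fintype α] {p : α → ℝ} (hp0 : ∀ i, 0 ≤ p i)
    (hp1 : ∑ i, p i = 1) {g : α → ℝ} {a b : ℝ} (hg : ∀ i, g i ∈ Set.Icc a b) (t : ℝ) :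
    ∑ i, p i * exp (t * g i) ≤ exp (t * ∑ i, p i * g i + t ^ 2 * (b - a) ^ 2 / 8) := by
  let _ : MeasurableSpace α := ⊤
  let ν : PMF α := PMF.ofFintype (fun i => ENNReal.ofReal (p i)) (by
    rw [← ENNReal.ofReal_sum_of_nonneg (fun i _ => hp0 i), hp1, ENNReal.ofReal_one])
  have hν (f : α → ℝ) : ∫ i, f i ∂ν.toMeasure = ∑ i, p i * f i := by
    simp [ν, PMF.integral_eq_sum, ENNReal.toReal_ofReal (hp0 _)]
  have h := (hasSubgaussianMGF_of_mem_Icc (μ := ν.toMeasure) (X := g)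
    (measurable_of_finite _).aemeasurable (ae_of_all _ hg)).mgf_le t
  rw [mgf, hν, hν] at h
  set m := ∑ i, p i * g i
  calc ∑ i, p i * exp (t * g i) = exp (t * m) * ∑ i, p i * exp (t * (g i - m)) := by
        rw [mul_sum]; congr 1 with i; rw [mul_sub, exp_sub]; field_simp
    _ ≤ exp (t * m) * exp (((‖b - a‖₊ / 2) ^ 2 : NNReal) * t ^ 2 / 2) := by gcongr
    _ = _ := by
        rw [← exp_add]; congr 1
        simp only [NNReal.coe_pow, NNReal.coe_div, coe_nnnorm, Real.norm_eq_abs, NNReal.coe_ofNat]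
        rw [div_pow, sq_abs]; ring

theorem sum_filter_le_exp_mul_sum {β : Type*} [Fintype β] {w : β → ℝ} (hw : ∀ b, 0 ≤ w b)
    (f : β → ℝ) (r : ℝ) {t : ℝ} (ht : 0 ≤ t) :
    ∑ b ∈ univ.filter (fun b => r ≤ f b), w b ≤ exp (-(t * r)) * ∑ b, w b * exp (t * f b) := by
  rw [mul_sum]
  calc ∑ b ∈ univ.filter (fun b => r ≤ f b), w b
      ≤ ∑ b ∈ univ.filter (fun b => r ≤ f b), exp (-(t * r)) * (w b * exp (t * f b)) := by
        refine sum_le_sum fun b hb => ?_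
        have hexp : 1 ≤ exp (-(t * r)) * exp (t * f b) := by
          rw [← exp_add, one_le_exp_iff]
          nlinarith [(mem_filter.1 hb).2]
        nlinarith [hw b]
    _ ≤ ∑ b, exp (-(t * r)) * (w b * exp (t * f b)) :=
        sum_le_sum_of_subset_of_nonneg (filter_subset _ _) fun b _ _ =>
          mul_nonneg (exp_pos _).le (mul_nonneg (hw b) (exp_pos _).le)

section PiWeight

variable {α : Type*} (p : α → ℝ)

def piWeight {ι : Type*} [Fintype ι] (a : ι → α) : ℝ := ∏ j, p (a j)

variable {p}

theorem piWeight_nonneg (hp0 : ∀ i, 0 ≤ p i) {ι : Type*} [Fintype ι] (a : ι → α) :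
    0 ≤ piWeight p a :=
  prod_nonneg fun j _ => hp0 (a j)

variable [Fintype α]

theorem sum_piWeight_mul_fin_zero (F : (Fin 0 → α) → ℝ) :
    ∑ a, piWeight p a * F a = F finZeroElim := by
  rw [Fintype.sum_unique, Subsingleton.elim default finZeroElim]
  simp [piWeight]

theorem sum_piWeight_mul_fin_succ {N : ℕ} (F : (Fin (N + 1) → α) → ℝ) :
    ∑ a, piWeight p a * F a = ∑ a, piWeight p a * ∑ i, p i * F (Fin.cons i a) := by
  rw [← (Fin.consEquiv fun _ => α).sum_comp, Fintype.sum_prod_type, sum_comm]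
  simp [piWeight, Fin.consEquiv, Fin.prod_univ_succ, mul_sum, mul_left_comm, mul_assoc]

variable (hp1 : ∑ i, p i = 1)
include hp1

theorem sum_piWeight {N : ℕ} : ∑ a : Fin N → α, piWeight p a = 1 := by
  induction N with
  | zero => simpa using sum_piWeight_mul_fin_zero (p := p) fun _ => (1 : ℝ)
  | succ N ih =>
    have h := sum_piWeight_mul_fin_succ (p := p) (N := N) fun _ => (1 : ℝ)
    simp only [mul_one, hp1] at h
    rw [h, ih]

theorem sum_piWeight_mul_sum_sq {N : ℕ} {d : α → ℝ} (hd : ∑ i, p i * d i = 0) :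
    ∑ a : Fin N → α, piWeight p a * (∑ j, d (a j)) ^ 2 = N * ∑ i, p i * d i ^ 2 := by
  induction N with
  | zero => simp
  | succ N ih =>
    have hfiber (s : ℝ) : ∑ i, p i * (d i + s) ^ 2 = ∑ i, p i * d i ^ 2 + s ^ 2 := by
      have : ∀ i, p i * (d i + s) ^ 2 = p i * d i ^ 2 + 2 * s * (p i * d i) + s ^ 2 * p i :=
        fun i => by ring
      simp only [this, sum_add_distrib, ← mul_sum, hd, hp1]
      ring
    rw [sum_piWeight_mul_fin_succ]
    simp only [Fin.sum_univ_succ, Fin.cons_zero, Fin.cons_succ, hfiber, mul_add, sum_add_distrib,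
      ← sum_mul, sum_piWeight hp1, ih]
    push_cast; ring

end PiWeight

def HasBoundedDifferences {ι α : Type*} [DecidableEq ι] (f : (ι → α) → ℝ) (c : ι → ℝ) : Prop :=
  ∀ a j x y, f (Function.update a j x) - f (Function.update a j y) ≤ c j

section McDiarmid

variable {α : Type*} [Fintype α] {p : α → ℝ} (hp0 : ∀ i, 0 ≤ p i) (hp1 : ∑ i, p i = 1)
include hp0 hp1

theorem HasBoundedDifferences.sum_mul_cons {N : ℕ} {f : (Fin (N + 1) → α) → ℝ}
    {c : Fin (N + 1) → ℝ} (hf : HasBoundedDifferences f c) :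
    HasBoundedDifferences (fun a => ∑ i, p i * f (Fin.cons i a)) (fun j => c j.succ) := by
  intro a j x y
  calc ∑ i, p i * f (Fin.cons i (Function.update a j x)) -
        ∑ i, p i * f (Fin.cons i (Function.update a j y))
      = ∑ i, p i * (f (Function.update (Fin.cons i a) j.succ x) -
          f (Function.update (Fin.cons i a) j.succ y)) := by
        simp only [Fin.cons_update, mul_sub, sum_sub_distrib]
    _ ≤ ∑ i, p i * c j.succ := sum_le_sum fun i _ => mul_le_mul_of_nonneg_left (hf _ _ _ _) (hp0 i)
    _ = c j.succ := by rw [← sum_mul, hp1, one_mul]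

theorem HasBoundedDifferences.sum_mul_exp_cons_le {N : ℕ} {f : (Fin (N + 1) → α) → ℝ}
    {c : Fin (N + 1) → ℝ} (hf : HasBoundedDifferences f c) (a : Fin N → α) (t : ℝ) :
    ∑ i, p i * exp (t * f (Fin.cons i a)) ≤
      exp (t * ∑ i, p i * f (Fin.cons i a) + t ^ 2 * c 0 ^ 2 / 8) := by
  have : Nonempty α := by
    by_contra h
    simp [not_nonempty_iff.1 h] at hp1
  obtain ⟨i₀, -, hmin⟩ := exists_min_image univ (fun i => f (Fin.cons i a)) univ_nonempty
  have hrange (i : α) :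
      f (Fin.cons i a) ∈ Set.Icc (f (Fin.cons i₀ a)) (f (Fin.cons i₀ a) + c 0) := by
    refine ⟨hmin i (mem_univ i), ?_⟩
    have := hf (Fin.cons i₀ a) 0 i i₀
    simp only [Fin.update_cons_zero] at this
    linarith
  simpa using sum_mul_exp_le_of_mem_Icc hp0 hp1 hrange t

theorem HasBoundedDifferences.sum_piWeight_mul_exp_le {N : ℕ} {f : (Fin N → α) → ℝ}
    {c : Fin N → ℝ} (hf : HasBoundedDifferences f c) (t : ℝ) :
    ∑ a, piWeight p a * exp (t * f a) ≤
      exp (t * ∑ a, piWeight p a * f a + t ^ 2 * (∑ j, c j ^ 2) / 8) := by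
  induction N with
  | zero => simp only [sum_piWeight_mul_fin_zero]; simp
  | succ N ih =>
    set g : (Fin N → α) → ℝ := fun a => ∑ i, p i * f (Fin.cons i a) with hg
    calc ∑ a, piWeight p a * exp (t * f a)
        = ∑ a, piWeight p a * ∑ i, p i * exp (t * f (Fin.cons i a)) :=
          sum_piWeight_mul_fin_succ _
      _ ≤ ∑ a, piWeight p a * exp (t * g a + t ^ 2 * c 0 ^ 2 / 8) :=
          sum_le_sum fun a _ => mul_le_mul_of_nonneg_left
            (hf.sum_mul_exp_cons_le hp0 hp1 a t) (piWeight_nonneg hp0 a)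
      _ = exp (t ^ 2 * c 0 ^ 2 / 8) * ∑ a, piWeight p a * exp (t * g a) := by
          rw [mul_sum]; congr 1 with a; rw [exp_add]; ring
      _ ≤ exp (t ^ 2 * c 0 ^ 2 / 8) *
            exp (t * ∑ a, piWeight p a * g a + t ^ 2 * (∑ j : Fin N, c j.succ ^ 2) / 8) := by
          gcongr
          exact ih (hf.sum_mul_cons hp0 hp1)
      _ = exp (t * ∑ a, piWeight p a * f a + t ^ 2 * (∑ j, c j ^ 2) / 8) := by
          rw [← exp_add, sum_piWeight_mul_fin_succ f, Fin.sum_univ_succ, hg]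
          ring_nf

theorem HasBoundedDifferences.sum_piWeight_filter_le {N : ℕ} {f : (Fin N → α) → ℝ}
    {c : Fin N → ℝ} (hf : HasBoundedDifferences f c) {ε : ℝ} (hε : 0 ≤ ε) :
    ∑ a ∈ univ.filter (fun a => ∑ b, piWeight p b * f b + ε ≤ f a), piWeight p a ≤
      exp (-2 * ε ^ 2 / ∑ j, c j ^ 2) := by
  set s := ∑ j, c j ^ 2
  set m := ∑ a, piWeight p a * f a
  obtain hs | hs := (show 0 ≤ s from sum_nonneg fun j _ => sq_nonneg (c j)).eq_or_lt
  · rw [← hs, div_zero, exp_zero, ← sum_piWeight (N := N) hp1]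
    exact sum_le_sum_of_subset_of_nonneg (filter_subset _ _)
      fun a _ _ => piWeight_nonneg hp0 a
  -- `4 ε / s` minimises the Chernoff exponent `-t ε + t² s / 8`.
  calc ∑ a ∈ univ.filter (fun a => m + ε ≤ f a), piWeight p a
      ≤ exp (-(4 * ε / s * (m + ε))) * ∑ a, piWeight p a * exp (4 * ε / s * f a) :=
        sum_filter_le_exp_mul_sum (piWeight_nonneg hp0) f _ (div_nonneg (by linarith) hs.le)
    _ ≤ exp (-(4 * ε / s * (m + ε))) * exp (4 * ε / s * m + (4 * ε / s) ^ 2 * s / 8) := by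
        gcongr
        exact hf.sum_piWeight_mul_exp_le hp0 hp1 _
    _ = exp (-2 * ε ^ 2 / s) := by
        rw [← exp_add]
        congr 1
        field_simp
        ring

end McDiarmid

theorem vnorm_eq_norm {m : ℕ} (v : Fin m → ℝ) : vnorm v = ‖WithLp.toLp 2 v‖ := by
  simp [vnorm, EuclideanSpace.norm_eq]

theorem vnorm_sub_vnorm_le {m : ℕ} (u w : Fin m → ℝ) : vnorm u - vnorm w ≤ vnorm (u - w) := by
  simpa only [vnorm_eq_norm, WithLp.toLp_sub] using norm_sub_norm_le _ _

theorem vnorm_div_const {m : ℕ} (v : Fin m → ℝ) {c : ℝ} (hc : 0 ≤ c) :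
    vnorm (fun i => v i / c) = vnorm v / c := by
  simp only [vnorm, div_pow, ← sum_div, sqrt_div' _ (sq_nonneg c), sqrt_sq hc]

theorem vnorm_indicator_sub_indicator_le {m : ℕ} (x y : Fin m) :
    vnorm (fun i => (if x = i then 1 else 0) - (if y = i then 1 else 0)) ≤ √2 := by
  refine sqrt_le_sqrt ?_
  calc ∑ i, ((if x = i then (1 : ℝ) else 0) - if y = i then 1 else 0) ^ 2
      ≤ ∑ i, ((if x = i then (1 : ℝ) else 0) + if y = i then 1 else 0) :=
        sum_le_sum fun i _ => by split_ifs <;> norm_num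
    _ = 2 := by simp only [sum_add_distrib, sum_ite_eq, mem_univ, ↓reduceIte]; norm_num

theorem natCast_card_filter_update_eq {n m : ℕ} (a : Fin n → Fin m) (j : Fin n) (x i : Fin m) :
    (#{k | Function.update a j x k = i} : ℝ) =
      (if x = i then 1 else 0) + #{k ∈ univ \ {j} | a k = i} := by
  rw [natCast_card_filter, natCast_card_filter]
  have : (fun k => if Function.update a j x k = i then (1 : ℝ) else 0) =
      Function.update (fun k => if a k = i then 1 else 0) j (if x = i then 1 else 0) :=
    Function.comp_update (fun z => if z = i then (1 : ℝ) else 0) a j x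
  rw [this, sum_update_of_mem (mem_univ j)]

noncomputable def empiricalError {m n : ℕ} (p : Fin m → ℝ) (a : Fin n → Fin m) : ℝ :=
  vnorm fun i => (#{j | a j = i} : ℝ) / n - p i

theorem hasBoundedDifferences_empiricalError {m n : ℕ} (p : Fin m → ℝ) (hn : 0 < n) :
    HasBoundedDifferences (empiricalError (n := n) p) fun _ => √2 / n := by
  intro a j x y
  refine (vnorm_sub_vnorm_le _ _).trans ?_
  have hcount (i : Fin m) : ((#{k | Function.update a j x k = i} : ℝ) / n - p i) -
      ((#{k | Function.update a j y k = i} : ℝ) / n - p i) =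
      ((if x = i then 1 else 0) - (if y = i then 1 else 0)) / n := by
    rw [natCast_card_filter_update_eq, natCast_card_filter_update_eq]
    ring
  have hnR : (0 : ℝ) < n := by exact_mod_cast hn
  calc vnorm (_ - _)
        = vnorm (fun i => ((if x = i then 1 else 0) - (if y = i then 1 else 0)) / n) := by
        congr 1; funext i; exact hcount i
    _ = vnorm (fun i => (if x = i then 1 else 0) - (if y = i then 1 else 0)) / n :=
        vnorm_div_const _ hnR.le
    _ ≤ √2 / n := by gcongr; exact vnorm_indicator_sub_indicator_le x y

section Variance

variable {m : ℕ} {p : Fin m → ℝ} (hp0 : ∀ i, 0 ≤ p i) (hp1 : ∑ i, p i = 1)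

include hp1 in
theorem sum_piWeight_mul_empirical_sub_sq {n : ℕ} (hn : 0 < n) (i : Fin m) :
    ∑ a : Fin n → Fin m, piWeight p a * ((#{j | a j = i} : ℝ) / n - p i) ^ 2 =
      p i * (1 - p i) / n := by
  have hnR : (0 : ℝ) < n := by exact_mod_cast hn
  set d : Fin m → ℝ := fun k => (if k = i then 1 else 0) - p i
  have hsum (a : Fin n → Fin m) : (#{j | a j = i} : ℝ) / n - p i = (∑ j, d (a j)) / n := by
    simp only [d, sum_sub_distrib, natCast_card_filter, sum_const, card_univ, Fintype.card_fin,
      nsmul_eq_mul]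
    field_simp
  have hmean : ∑ k, p k * d k = 0 := by
    simp [d, mul_sub, sum_sub_distrib, ← sum_mul, hp1]
  have hvar : ∑ k, p k * d k ^ 2 = p i * (1 - p i) := by
    have (k : Fin m) :
        p k * d k ^ 2 = (if k = i then p k else 0) * (1 - 2 * p i) + p i ^ 2 * p k := by
      simp only [d]; split_ifs <;> ring
    simp only [this, sum_add_distrib, ← sum_mul, ← mul_sum, hp1, sum_ite_eq', mem_univ, if_true]
    ring
  simp only [hsum, div_pow, ← mul_div_assoc, ← sum_div, sum_piWeight_mul_sum_sq hp1 hmean, hvar]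
  field_simp

include hp0 hp1 in
theorem sum_piWeight_mul_empiricalError_sq_le {n : ℕ} (hn : 0 < n) :
    ∑ a : Fin n → Fin m, piWeight p a * empiricalError p a ^ 2 ≤ 1 / n := by
  have hsq (a : Fin n → Fin m) :
      empiricalError p a ^ 2 = ∑ i, ((#{j | a j = i} : ℝ) / n - p i) ^ 2 :=
    sq_sqrt (sum_nonneg fun i _ => sq_nonneg _)
  calc ∑ a : Fin n → Fin m, piWeight p a * empiricalError p a ^ 2
      = ∑ i, p i * (1 - p i) / n := by
        simp only [hsq, mul_sum]
        rw [sum_comm]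
        exact sum_congr rfl fun i _ => sum_piWeight_mul_empirical_sub_sq hp1 hn i
    _ ≤ ∑ i, p i / n := by
        gcongr with i
        nlinarith [hp0 i]
    _ = 1 / n := by rw [← sum_div, hp1]

include hp0 hp1 in
theorem sum_piWeight_mul_empiricalError_le {n : ℕ} (hn : 0 < n) :
    ∑ a : Fin n → Fin m, piWeight p a * empiricalError p a ≤ 1 / √n := by
  have hjensen : (∑ a : Fin n → Fin m, piWeight p a * empiricalError p a) ^ 2 ≤
      ∑ a : Fin n → Fin m, piWeight p a * empiricalError p a ^ 2 :=
    (even_two.convexOn_pow (𝕜 := ℝ)).map_sum_le (fun a _ => piWeight_nonneg hp0 a)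
      (sum_piWeight hp1) (fun a _ => Set.mem_univ _)
  calc _ ≤ |∑ a : Fin n → Fin m, piWeight p a * empiricalError p a| := le_abs_self _
    _ ≤ √(1 / n) := abs_le_sqrt (hjensen.trans (sum_piWeight_mul_empiricalError_sq_le hp0 hp1 hn))
    _ = 1 / √n := by rw [sqrt_div' _ (Nat.cast_nonneg n), sqrt_one]

end Variance

theorem measureReal_setOf_eq_sum_piWeight {Ω ι α : Type*} [MeasurableSpace Ω] [Fintype ι]
    [DecidableEq ι] [Fintype α] [MeasurableSpace α] [MeasurableSingletonClass α] {μ : Measure Ω}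
    [IsFiniteMeasure μ] {x : ι → Ω → α} (hmeas : ∀ j, Measurable (x j)) (hindep : iIndepFun x μ)
    {p : α → ℝ} (hdist : ∀ j i, μ.real {ω | x j ω = i} = p i)
    (P : (ι → α) → Prop) [DecidablePred P] :
    μ.real {ω | P fun j => x j ω} = ∑ a ∈ univ.filter P, piWeight p a := by
  have hfiber (a : ι → α) : (fun ω j => x j ω) ⁻¹' {a} = ⋂ j, x j ⁻¹' {a j} := by
    ext ω; simp [funext_iff]
  have hcyl (a : ι → α) : MeasurableSet ((fun ω j => x j ω) ⁻¹' {a}) := by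
    rw [hfiber]; exact .iInter fun j => hmeas j (measurableSet_singleton _)
  rw [show {ω | P fun j => x j ω} = (fun ω j => x j ω) ⁻¹' ↑(univ.filter P) by ext; simp,
    ← sum_measureReal_preimage_singleton _ fun a _ => hcyl a]
  refine sum_congr rfl fun a _ => ?_
  rw [hfiber, measureReal_def, hindep.meas_iInter fun j => ⟨{a j}, measurableSet_singleton _, rfl⟩,
    ENNReal.toReal_prod]
  exact prod_congr rfl fun j _ => hdist j (a j)

/-- (Accuracy of empirical probabilities.) Fix `p ∈ Δ^{m−1}`.
Let `x_1,…,x_n` be i.i.d. random coordinate vectors (encoded by their index in `Fin m`)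
with `Pr[x = e_i] = p_i`, and let `μ̂` be the empirical distribution.  Then for all
`t > 0`, `Pr[‖μ̂ − p‖₂ > (1+√t)/√n] ≤ e^{−t}`. -/
theorem stmt_17 {m n : ℕ} (hn : 0 < n) {Ω : Type*} [MeasurableSpace Ω]
    (μ : Measure Ω) [IsProbabilityMeasure μ]
    (p : Fin m → ℝ) (hp0 : ∀ i, 0 ≤ p i) (hp1 : ∑ i, p i = 1)
    (x : Fin n → Ω → Fin m) (hmeas : ∀ j, Measurable (x j))
    (hindep : ProbabilityTheory.iIndepFun x μ)
    (hdist : ∀ j i, (μ {ω | x j ω = i}).toReal = p i) :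
    ∀ t : ℝ, 0 < t →
      (μ {ω | (1 + Real.sqrt t) / Real.sqrt n <
        vnorm (fun i => ((Finset.univ.filter fun j => x j ω = i).card : ℝ) / n - p i)}).toReal
        ≤ Real.exp (-t) := by
  intro t ht
  have hnR : (0 : ℝ) < n := by exact_mod_cast hn
  have hthreshold (a : Fin n → Fin m) (ha : (1 + √t) / √n < empiricalError p a) :
      ∑ b : Fin n → Fin m, piWeight p b * empiricalError p b + √t / √n ≤ empiricalError p a := by
    have := sum_piWeight_mul_empiricalError_le hp0 hp1 hn
    rw [add_div] at ha
    linarith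
  calc μ.real {ω | (1 + √t) / √n < empiricalError p fun j => x j ω}
      = ∑ a ∈ univ.filter (fun a => (1 + √t) / √n < empiricalError p a), piWeight p a :=
        measureReal_setOf_eq_sum_piWeight hmeas hindep hdist
          fun a => (1 + √t) / √n < empiricalError p a
    _ ≤ ∑ a ∈ univ.filter (fun a => ∑ b, piWeight p b * empiricalError p b + √t / √n ≤
          empiricalError p a), piWeight p a :=
        sum_le_sum_of_subset_of_nonneg (monotone_filter_right _ fun a _ => hthreshold a)
          fun a _ _ => piWeight_nonneg hp0 a
    _ ≤ exp (-2 * (√t / √n) ^ 2 / ∑ _j : Fin n, (√2 / n) ^ 2) :=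
        (hasBoundedDifferences_empiricalError p hn).sum_piWeight_filter_le hp0 hp1 (by positivity)
    _ = exp (-t) := by
        rw [sum_const, card_univ, Fintype.card_fin, nsmul_eq_mul, div_pow, div_pow,
          sq_sqrt ht.le, sq_sqrt hnR.le, sq_sqrt zero_le_two]
        field_simp
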